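/- arXiv:2003.13456 — 3 statements merged into one kernel-verified Lean document; each statement's English description precedes it below -/
import Mathlib

section
/- Let a, b, c, d, e ∈ ℝ with δ := ad − bc > 0, and let Y : [x_P, x_A] → ℝ be continuous with 0 < x_P < x_A and (a·x + b·Y(x))² + c·x + d·Y(x) + e = 0 for all x ∈ [x_P, x_A]. Let ξ, Λ ∈ ℝ be such that ξx − Λ² − Y(x) > 0 on (x_P, x_A) and ξx_P − Λ² = Y(x_P), ξx_A − Λ² = Y(x_A). Suppose x_C ∈ (x_P, x_A) and Λ_C ∈ ℝ satisfy Y(x_C) = ξ·x_C − Λ_C², Y is differentiable at x_C with Y′(x_C) = ξ, and Λ_C² > Λ². Then the period integral T := (1/2)∫_{x_P}^{x_A} dx/√(ξx − Λ² − Y(x)) satisfies Hénon's formula T = (π/4)·(x_A − x_P)/√(Λ_C² − Λ²). -/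
/-!
Along the arc, `σ = a x + b Y(x)` is a parameter in which both `x = X(σ)` and the radicand
`ξ x - Λ² - Y(x) = G(σ)` are quadratic. Tangency at `x_C` makes `σ_C = σ(x_C)` the vertex of `G`,
with `G(σ_C) = Λ_C² - Λ²`, so the roots `σ(x_P), σ(x_A)` of `G` are `σ_C ∓ t` and
`G(σ) = (Λ_C² - Λ²)(1 - (σ - σ_C)²/t²)`. Substituting `x = X(σ)` turns the period integral into
`∫ |X'(σ)| / √G(σ)` over `[σ_C - t, σ_C + t]`. As `X` is injective there, the affine function `X'`
keeps its sign, its odd part integrates to zero against the even weight, and the result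
`π |t| |X'(σ_C)| / √(Λ_C² - Λ²)` is `π (x_A - x_P) / (2 √(Λ_C² - Λ²))` because
`X(σ_C + t) - X(σ_C - t) = 2 t X'(σ_C)`.
-/

open Real Set Filter Topology

theorem parabola_abscissa {a b c d e x y : ℝ} (hδ : a * d - b * c ≠ 0)
    (h : (a * x + b * y) ^ 2 + c * x + d * y + e = 0) :
    b / (a * d - b * c) * (a * x + b * y) ^ 2 + d / (a * d - b * c) * (a * x + b * y) +
      b * e / (a * d - b * c) = x := by
  field_simp
  linear_combination b * h

theorem parabola_radicand {a b c d e x y : ℝ} (ξ k : ℝ) (hδ : a * d - b * c ≠ 0)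
    (h : (a * x + b * y) ^ 2 + c * x + d * y + e = 0) :
    (a + b * ξ) / (a * d - b * c) * (a * x + b * y) ^ 2 +
      (c + d * ξ) / (a * d - b * c) * (a * x + b * y) +
      ((a + b * ξ) * e / (a * d - b * c) - k) = ξ * x - k - y := by
  field_simp
  linear_combination (a + b * ξ) * h

theorem hasDerivAt_quadratic (α β γ x : ℝ) :
    HasDerivAt (fun σ => α * σ ^ 2 + β * σ + γ) (2 * α * x + β) x := by
  simpa [mul_comm, mul_left_comm] using
    (((hasDerivAt_pow 2 x).const_mul α).add ((hasDerivAt_id x).const_mul β)).add_const γ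

theorem exists_eq_vertex_form_of_roots {α β γ m p r : ℝ} (hm : 2 * α * m + β = 0)
    (hp : α * p ^ 2 + β * p + γ = 0) (hr : α * r ^ 2 + β * r + γ = 0) (hpr : p ≠ r)
    (hpos : 0 < α * m ^ 2 + β * m + γ) :
    ∃ t ≠ 0, p = m - t ∧ r = m + t ∧
      ∀ σ, α * σ ^ 2 + β * σ + γ = (α * m ^ 2 + β * m + γ) * (1 - (σ - m) ^ 2 / t ^ 2) := by
  set Δ := α * m ^ 2 + β * m + γ
  have hform : ∀ σ, α * σ ^ 2 + β * σ + γ = Δ + α * (σ - m) ^ 2 := fun σ => by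
    linear_combination (σ - m) * hm
  have hpm : α * (p - m) ^ 2 = -Δ := by linarith [hform p]
  have hrm : α * (r - m) ^ 2 = -Δ := by linarith [hform r]
  have hα : α ≠ 0 := by
    rintro rfl
    linarith
  have hrm' : r - m ≠ 0 := by
    intro h
    rw [h] at hrm
    linarith
  refine ⟨r - m, hrm', ?_, by ring, fun σ => ?_⟩
  · rcases sq_eq_sq_iff_eq_or_eq_neg.1 (mul_left_cancel₀ hα (hpm.trans hrm.symm)) with h | h
    · exact absurd (by linarith) hpr
    · linarith
  · have hα' : α = -Δ / (r - m) ^ 2 := by rw [eq_div_iff (pow_ne_zero 2 hrm'), hrm]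
    rw [hform σ, hα']
    ring

theorem uIcc_sub_add_eq_Icc (m t : ℝ) : uIcc (m - t) (m + t) = Icc (m - |t|) (m + |t|) := by
  rcases le_total 0 t with ht | ht
  · rw [uIcc_of_le (by linarith), abs_of_nonneg ht]
  · rw [uIcc_of_ge (by linarith), abs_of_nonpos ht, sub_neg_eq_add, ← sub_eq_add_neg]

/- Otherwise the vertex `σ₀` lies at distance `< |t|` from `m`, and the quadratic takes the same
value at the two points `σ₀ ± r` of the interval. -/
theorem abs_mul_abs_le_of_injOn_quadratic {α β γ m t : ℝ}
    (hinj : InjOn (fun σ => α * σ ^ 2 + β * σ + γ) (uIcc (m - t) (m + t))) :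
    |2 * α| * |t| ≤ |2 * α * m + β| := by
  by_contra! hlt
  have hα : α ≠ 0 := by
    rintro rfl
    simp only [mul_zero, zero_mul, zero_add, abs_zero] at hlt
    exact (abs_nonneg β).not_gt hlt
  set σ₀ := -β / (2 * α)
  have hvertex : 2 * α * σ₀ + β = 0 := by
    simp only [σ₀]
    field_simp
    ring
  have hdist : |σ₀ - m| < |t| := by
    rw [show σ₀ - m = -(2 * α * m + β) / (2 * α) by simp only [σ₀]; field_simp; ring,
      abs_div, abs_neg, div_lt_iff₀ (by positivity)]
    linarith
  set r := |t| - |σ₀ - m|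
  have hr : 0 < r := sub_pos.2 hdist
  have hmem : ∀ σ, |σ - σ₀| ≤ r → σ ∈ uIcc (m - t) (m + t) := fun σ hσ => by
    have h := abs_sub_le_iff.1 ((abs_sub_le σ σ₀ m).trans (show _ ≤ |t| by linarith))
    rw [uIcc_sub_add_eq_Icc]
    constructor <;> linarith [h.1, h.2]
  have hsym := hinj (hmem (σ₀ + r) (by simp [abs_of_pos hr]))
    (hmem (σ₀ - r) (by simp [abs_of_pos hr]))
    (by linear_combination (2 * r) * hvertex)
  linarith

theorem HasDerivAt.eq_zero_of_comp_of_leftInverse {s X G : ℝ → ℝ} {s' X' G' x₀ : ℝ}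
    (hs : HasDerivAt s s' x₀) (hX : HasDerivAt X X' (s x₀)) (hG : HasDerivAt G G' (s x₀))
    (hXs : X ∘ s =ᶠ[𝓝 x₀] id) (hGs : HasDerivAt (G ∘ s) 0 x₀) : G' = 0 := by
  have h₁ : X' * s' = 1 := (hX.comp x₀ hs).unique ((hasDerivAt_id x₀).congr_of_eventuallyEq hXs)
  have h₂ : G' * s' = 0 := (hG.comp x₀ hs).unique hGs
  exact (mul_eq_zero.1 h₂).resolve_right (right_ne_zero_of_mul_eq_one h₁)

theorem parabola_vertex_of_hasDerivAt {a b c d e ξ x₀ : ℝ} {Y : ℝ → ℝ}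
    (hδ : a * d - b * c ≠ 0)
    (hpara : ∀ᶠ x in 𝓝 x₀, (a * x + b * Y x) ^ 2 + c * x + d * Y x + e = 0)
    (hY : HasDerivAt Y ξ x₀) :
    2 * ((a + b * ξ) / (a * d - b * c)) * (a * x₀ + b * Y x₀) + (c + d * ξ) / (a * d - b * c) =
      0 := by
  refine HasDerivAt.eq_zero_of_comp_of_leftInverse (s := fun x => a * x + b * Y x)
    (((hasDerivAt_id x₀).const_mul a).add (hY.const_mul b)) (hasDerivAt_quadratic _ _ _ _)
    (hasDerivAt_quadratic _ _ ((a + b * ξ) * e / (a * d - b * c) - 0) _)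
    (hpara.mono fun x hx => parabola_abscissa hδ hx) ?_
  refine HasDerivAt.congr_of_eventuallyEq ?_ (hpara.mono fun x hx => parabola_radicand ξ 0 hδ hx)
  have hF : HasDerivAt (fun x => ξ * x - 0 - Y x) (ξ * 1 - ξ) x₀ :=
    (((hasDerivAt_id x₀).const_mul ξ).sub_const 0).sub hY
  rwa [mul_one, sub_self] at hF

section LeftInverse

variable {s X : ℝ → ℝ} {p q : ℝ}

theorem uIcc_subset_image_Icc (hpq : p ≤ q) (hs : ContinuousOn s (Icc p q)) :
    uIcc (s p) (s q) ⊆ s '' Icc p q := by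
  rw [← uIcc_of_le hpq]
  exact intermediate_value_uIcc (by rwa [uIcc_of_le hpq])

theorem Set.LeftInvOn.injOn_uIcc (hXs : LeftInvOn X s (Icc p q)) (hpq : p ≤ q)
    (hs : ContinuousOn s (Icc p q)) : InjOn X (uIcc (s p) (s q)) :=
  hXs.rightInvOn_image.injOn.mono (uIcc_subset_image_Icc hpq hs)

/- The change of variables formula for injective maps needs no integrability of `g`, so it also
applies to the improper integrals of the period. -/
theorem Set.LeftInvOn.intervalIntegral_comp_eq_setIntegral_abs_deriv {X' : ℝ → ℝ}
    (hXs : LeftInvOn X s (Icc p q)) (hpq : p ≤ q) (hs : ContinuousOn s (Icc p q))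
    (hX : ∀ σ, HasDerivAt X (X' σ) σ) (g : ℝ → ℝ) :
    ∫ x in p..q, g (s x) = ∫ σ in uIcc (s p) (s q), |X' σ| * g σ := by
  have hsub := uIcc_subset_image_Icc hpq hs
  have himage : X '' uIcc (s p) (s q) = Icc p q := by
    refine Subset.antisymm ?_ ?_
    · rintro _ ⟨σ, hσ, rfl⟩
      obtain ⟨x, hx, rfl⟩ := hsub hσ
      rwa [hXs hx]
    · have := intermediate_value_uIcc (f := X) (a := s p) (b := s q)
        fun σ _ => (hX σ).continuousAt.continuousWithinAt
      rwa [hXs (left_mem_Icc.2 hpq), hXs (right_mem_Icc.2 hpq), uIcc_of_le hpq] at this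
  calc ∫ x in p..q, g (s x) = ∫ x in X '' uIcc (s p) (s q), g (s x) := by
        rw [himage, intervalIntegral.integral_of_le hpq, MeasureTheory.integral_Icc_eq_integral_Ioc]
    _ = ∫ σ in uIcc (s p) (s q), |X' σ| • g (s (X σ)) :=
        MeasureTheory.integral_image_eq_integral_abs_deriv_smul measurableSet_uIcc
          (fun σ _ => (hX σ).hasDerivWithinAt) (hXs.injOn_uIcc hpq hs) _
    _ = ∫ σ in uIcc (s p) (s q), |X' σ| * g σ :=
        MeasureTheory.setIntegral_congr_fun measurableSet_uIcc fun σ hσ => by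
          rw [smul_eq_mul, hXs.rightInvOn_image (hsub hσ)]

end LeftInverse

theorem integral_add_mul_div_sqrt_one_sub_sq {A B : ℝ} (h : |B| ≤ A) :
    ∫ τ in (-1)..1, (A + B * τ) / √(1 - τ ^ 2) = π * A := by
  set H : ℝ → ℝ := fun τ => A * arcsin τ - B * √(1 - τ ^ 2)
  have hcont : ContinuousOn H (Icc (-1) 1) := by fun_prop
  have hderiv : ∀ τ ∈ Ioo (-1 : ℝ) 1, HasDerivAt H ((A + B * τ) / √(1 - τ ^ 2)) τ := by
    intro τ ⟨h₁, h₂⟩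
    have hpos : 0 < 1 - τ ^ 2 := by nlinarith
    refine (((hasDerivAt_arcsin h₁.ne' h₂.ne).const_mul A).sub
      ((((hasDerivAt_pow 2 τ).const_sub 1).sqrt hpos.ne').const_mul B)).congr_deriv ?_
    field_simp
    ring
  have hnonneg : ∀ τ ∈ Ioo (-1 : ℝ) 1, 0 ≤ (A + B * τ) / √(1 - τ ^ 2) := by
    intro τ ⟨h₁, h₂⟩
    have : |B * τ| ≤ A := by
      rw [abs_mul]
      exact (mul_le_of_le_one_right (abs_nonneg B) (abs_le.2 ⟨h₁.le, h₂.le⟩)).trans h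
    exact div_nonneg (by linarith [neg_abs_le (B * τ)]) (sqrt_nonneg _)
  have hint : IntervalIntegrable (fun τ => (A + B * τ) / √(1 - τ ^ 2)) MeasureTheory.volume (-1) 1 :=
    intervalIntegral.intervalIntegrable_deriv_of_nonneg (g := H)
      (by rwa [uIcc_of_le (by norm_num)]) (by simpa using hderiv) (by simpa using hnonneg)
  rw [intervalIntegral.integral_eq_sub_of_hasDerivAt_of_le (by norm_num) hcont hderiv hint]
  simp [H]
  ring

theorem integral_abs_add_mul_div_sqrt_one_sub_sq {A B : ℝ} (h : |B| ≤ |A|) :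
    ∫ τ in (-1)..1, |A + B * τ| / √(1 - τ ^ 2) = π * |A| := by
  have hBτ : ∀ τ ∈ uIcc (-1 : ℝ) 1, |B * τ| ≤ |A| := fun τ hτ => by
    rw [uIcc_of_le (by norm_num)] at hτ
    rw [abs_mul]
    exact (mul_le_of_le_one_right (abs_nonneg B) (abs_le.2 hτ)).trans h
  rcases le_total 0 A with hA | hA
  · rw [abs_of_nonneg hA] at h hBτ ⊢
    rw [← integral_add_mul_div_sqrt_one_sub_sq h]
    refine intervalIntegral.integral_congr fun τ hτ => ?_
    rw [abs_of_nonneg (by linarith [neg_abs_le (B * τ), hBτ τ hτ])]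
  · rw [abs_of_nonpos hA] at h hBτ ⊢
    rw [← abs_neg B] at h
    rw [← integral_add_mul_div_sqrt_one_sub_sq h]
    refine intervalIntegral.integral_congr fun τ hτ => ?_
    rw [abs_of_nonpos (by linarith [le_abs_self (B * τ), hBτ τ hτ])]
    ring

theorem setIntegral_uIcc_abs_affine_div_sqrt {u v m t Δ : ℝ} (ht : t ≠ 0) (hΔ : 0 < Δ)
    (h : |u| * |t| ≤ |u * m + v|) :
    ∫ σ in uIcc (m - t) (m + t), |u * σ + v| / √(Δ * (1 - (σ - m) ^ 2 / t ^ 2)) =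
      π * |t| * |u * m + v| / √Δ := by
  set ε := |t|
  have hε : 0 < ε := abs_pos.2 ht
  have hrescale : ∀ τ, |u * (ε * τ + m) + v| / √(Δ * (1 - (ε * τ + m - m) ^ 2 / t ^ 2)) =
      |(u * m + v) + (u * ε) * τ| / √(1 - τ ^ 2) / √Δ := fun τ => by
    rw [← sq_abs t, sqrt_mul hΔ.le, add_sub_cancel_right, mul_pow,
      mul_div_cancel_left₀ _ (pow_ne_zero 2 hε.ne'), div_div, mul_comm (√Δ)]
    ring_nf
  have hbound : |u * ε| ≤ |u * m + v| := by rwa [abs_mul, abs_abs]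
  calc ∫ σ in uIcc (m - t) (m + t), |u * σ + v| / √(Δ * (1 - (σ - m) ^ 2 / t ^ 2))
      = ∫ σ in (ε * -1 + m)..(ε * 1 + m), |u * σ + v| / √(Δ * (1 - (σ - m) ^ 2 / t ^ 2)) := by
        rw [show ε * -1 + m = m - ε by ring, show ε * 1 + m = m + ε by ring, uIcc_sub_add_eq_Icc,
          intervalIntegral.integral_of_le (by linarith), MeasureTheory.integral_Icc_eq_integral_Ioc]
    _ = ε * ((π * |u * m + v|) / √Δ) := by
        rw [← intervalIntegral.smul_integral_comp_mul_add, smul_eq_mul]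
        simp only [hrescale, intervalIntegral.integral_div,
          integral_abs_add_mul_div_sqrt_one_sub_sq hbound]
    _ = π * ε * |u * m + v| / √Δ := by ring

theorem integral_one_div_sqrt_comp_of_leftInvOn_quadratic {s : ℝ → ℝ} {α β γ p q m t Δ : ℝ}
    (hpq : p < q) (hs : ContinuousOn s (Icc p q))
    (hXs : LeftInvOn (fun σ => α * σ ^ 2 + β * σ + γ) s (Icc p q))
    (hsp : s p = m - t) (hsq : s q = m + t) (ht : t ≠ 0) (hΔ : 0 < Δ) :
    ∫ x in p..q, 1 / √(Δ * (1 - (s x - m) ^ 2 / t ^ 2)) = π / 2 * (q - p) / √Δ := by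
  have hinj := hsp ▸ hsq ▸ hXs.injOn_uIcc hpq.le hs
  have hwidth : q - p = 2 * t * (2 * α * m + β) := by
    rw [← hXs (right_mem_Icc.2 hpq.le), ← hXs (left_mem_Icc.2 hpq.le), hsp, hsq]
    ring
  rw [hXs.intervalIntegral_comp_eq_setIntegral_abs_deriv hpq.le hs
      (fun σ => hasDerivAt_quadratic α β γ σ) (fun σ => 1 / √(Δ * (1 - (σ - m) ^ 2 / t ^ 2))),
    hsp, hsq]
  simp only [mul_one_div]
  rw [setIntegral_uIcc_abs_affine_div_sqrt ht hΔ (abs_mul_abs_le_of_injOn_quadratic hinj),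
    ← abs_of_pos (sub_pos.2 hpq), hwidth, abs_mul, abs_mul, abs_two]
  ring

theorem henon_formula_period_general
    (a b c d e x_P x_A ξ Λ Λc x_C : ℝ) (Y : ℝ → ℝ)
    (hδ : 0 < a * d - b * c)
    (hx : x_P < x_A)
    (hYcont : ContinuousOn Y (Set.Icc x_P x_A))
    (hpara : ∀ x ∈ Set.Icc x_P x_A,
      (a * x + b * Y x) ^ 2 + c * x + d * Y x + e = 0)
    (hP : ξ * x_P - Λ ^ 2 = Y x_P) (hA : ξ * x_A - Λ ^ 2 = Y x_A)
    (hxC : x_C ∈ Set.Ioo x_P x_A)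
    (hC : Y x_C = ξ * x_C - Λc ^ 2)
    (hC' : HasDerivAt Y ξ x_C)
    (hΛ : Λ ^ 2 < Λc ^ 2) :
    (1 / 2) * (∫ x in x_P..x_A, 1 / Real.sqrt (ξ * x - Λ ^ 2 - Y x)) =
      Real.pi / 4 * (x_A - x_P) / Real.sqrt (Λc ^ 2 - Λ ^ 2) := by
  set δ := a * d - b * c
  set s : ℝ → ℝ := fun x => a * x + b * Y x
  set G : ℝ → ℝ := fun σ =>
    (a + b * ξ) / δ * σ ^ 2 + (c + d * ξ) / δ * σ + ((a + b * ξ) * e / δ - Λ ^ 2)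
  have hXs : LeftInvOn (fun σ => b / δ * σ ^ 2 + d / δ * σ + b * e / δ) s (Icc x_P x_A) :=
    fun x hx => parabola_abscissa hδ.ne' (hpara x hx)
  have hGs : ∀ x ∈ Icc x_P x_A, G (s x) = ξ * x - Λ ^ 2 - Y x := fun x hx =>
    parabola_radicand ξ _ hδ.ne' (hpara x hx)
  have hmemP : x_P ∈ Icc x_P x_A := left_mem_Icc.2 hx.le
  have hmemA : x_A ∈ Icc x_P x_A := right_mem_Icc.2 hx.le
  have hGC : G (s x_C) = Λc ^ 2 - Λ ^ 2 := by
    rw [hGs x_C (Ioo_subset_Icc_self hxC)]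
    linarith
  obtain ⟨t, ht, hsP, hsA, hG⟩ : ∃ t ≠ 0, s x_P = s x_C - t ∧ s x_A = s x_C + t ∧
      ∀ σ, G σ = G (s x_C) * (1 - (σ - s x_C) ^ 2 / t ^ 2) :=
    exists_eq_vertex_form_of_roots
      (parabola_vertex_of_hasDerivAt hδ.ne'
        (eventually_of_mem (Icc_mem_nhds hxC.1 hxC.2) hpara) hC')
      (show G (s x_P) = 0 by rw [hGs x_P hmemP]; linarith)
      (show G (s x_A) = 0 by rw [hGs x_A hmemA]; linarith)
      (fun h => hx.ne (by rw [← hXs hmemP, ← hXs hmemA, h]))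
      (show 0 < G (s x_C) by linarith)
  calc (1 / 2) * (∫ x in x_P..x_A, 1 / √(ξ * x - Λ ^ 2 - Y x))
      = (1 / 2) * ∫ x in x_P..x_A, 1 / √((Λc ^ 2 - Λ ^ 2) * (1 - (s x - s x_C) ^ 2 / t ^ 2)) := by
        congr 1
        refine intervalIntegral.integral_congr fun x hx' => ?_
        rw [uIcc_of_le hx.le] at hx'
        rw [← hGC, ← hG, hGs x hx']
    _ = π / 4 * (x_A - x_P) / √(Λc ^ 2 - Λ ^ 2) := by
        rw [integral_one_div_sqrt_comp_of_leftInvOn_quadratic hx (by fun_prop) hXs hsP hsA ht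
          (by linarith)]
        ring

/-- Hénon's formula: for an orbit `(ξ, Λ)` in an isochrone potential whose curve
`y = Y(x)` in Hénon variables is an arc of parabola `(ax+by)² + cx + dy + e = 0`
with discriminant `δ = ad - bc > 0`, the radial period satisfies
`T = (π/4)(x_A - x_P)/√(Λ_C² - Λ²)`, where `Λ_C` is the angular momentum of the
circular orbit of the same energy, tangency point `x_C`. -/
theorem henon_formula_period
    (a b c d e x_P x_A ξ Λ Λc x_C : ℝ) (Y : ℝ → ℝ)
    (hδ : 0 < a * d - b * c)
    (hxP : 0 < x_P) (hx : x_P < x_A)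
    (hYcont : ContinuousOn Y (Set.Icc x_P x_A))
    (hpara : ∀ x ∈ Set.Icc x_P x_A,
      (a * x + b * Y x) ^ 2 + c * x + d * Y x + e = 0)
    (hpos : ∀ x ∈ Set.Ioo x_P x_A, 0 < ξ * x - Λ ^ 2 - Y x)
    (hP : ξ * x_P - Λ ^ 2 = Y x_P) (hA : ξ * x_A - Λ ^ 2 = Y x_A)
    (hxC : x_C ∈ Set.Ioo x_P x_A)
    (hC : Y x_C = ξ * x_C - Λc ^ 2)
    (hC' : HasDerivAt Y ξ x_C)
    (hΛ : Λ ^ 2 < Λc ^ 2) :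
    (1 / 2) * (∫ x in x_P..x_A, 1 / Real.sqrt (ξ * x - Λ ^ 2 - Y x)) =
      Real.pi / 4 * (x_A - x_P) / Real.sqrt (Λc ^ 2 - Λ ^ 2) :=
  henon_formula_period_general a b c d e x_P x_A ξ Λ Λc x_C Y hδ hx hYcont hpara hP hA hxC hC hC' hΛ
end

section
/- Let μ > 0, β ≥ 0, ε ∈ ℝ, λ ∈ ℝ, and ψ(r) := ε + λ/(2r²) − μ/(β + √(β² + r²)) (a potential of the Hénon family). Let ξ < ε and Λ ∈ ℝ, and let 0 < r_P < r_A be such that 2ξ − 2ψ(r) − Λ²/r² > 0 for r ∈ (r_P, r_A) and vanishes at r_P and r_A. Then the radial period T := 2∫_{r_P}^{r_A} dr/√(2ξ − 2ψ(r) − Λ²/r²) satisfies T² = (π²/2)·μ²/(ε − ξ)³; in particular T depends only on ξ and not on Λ. -/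
/-!
With `u = √(β² + r²)` one has `r² = (u - β)(u + β)`, so `r²(2ξ - 2ψ(r) - Λ²/r²)` is a quadratic
in `u` with leading coefficient `2(ξ - ε)`, whose roots are `u_P` and `u_A`; by Vieta,
`u_P + u_A = μ/(ε - ξ)`. Since `r dr = u du`, the period integral becomes
`∫ u du / √(2(ε - ξ)(u_A - u)(u - u_P))` over `[u_P, u_A]`, whose value
`π(u_P + u_A)/(2√(2(ε - ξ)))` depends only on the sum of the roots.
-/

open Real Set intervalIntegral

theorem vieta_of_roots {K : Type*} [Field K] {a b c x y : K} (hxy : x ≠ y)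
    (hx : a * x ^ 2 + b * x + c = 0) (hy : a * y ^ 2 + b * y + c = 0) :
    b = -a * (x + y) ∧ c = a * x * y := by
  have hb : b = -a * (x + y) := by
    have : (x - y) * (a * (x + y) + b) = 0 := by linear_combination hx - hy
    linear_combination (mul_eq_zero.mp this).resolve_left (sub_ne_zero.mpr hxy)
  exact ⟨hb, by linear_combination hx - x * hb⟩

noncomputable def isochronePrimitive (p q u : ℝ) : ℝ :=
  (p + q) / 2 * arcsin ((2 * u - p - q) / (q - p)) - √((q - u) * (u - p))

theorem continuous_isochronePrimitive (p q : ℝ) : Continuous (isochronePrimitive p q) := by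
  unfold isochronePrimitive
  fun_prop [continuous_arcsin]

theorem isochronePrimitive_sub {p q : ℝ} (hpq : p < q) :
    isochronePrimitive p q q - isochronePrimitive p q p = (p + q) / 2 * π := by
  have hqp : q - p ≠ 0 := sub_ne_zero.mpr hpq.ne'
  have h1 : (2 * q - p - q) / (q - p) = 1 := by rw [div_eq_one_iff_eq hqp]; ring
  have h2 : (2 * p - p - q) / (q - p) = -1 := by rw [div_eq_iff hqp]; ring
  simp only [isochronePrimitive, h1, h2, arcsin_one, arcsin_neg_one, sub_self, zero_mul, mul_zero,
    sqrt_zero]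
  ring

theorem hasDerivAt_isochronePrimitive {p q u : ℝ} (hu : u ∈ Ioo p q) :
    HasDerivAt (isochronePrimitive p q) (u / √((q - u) * (u - p))) u := by
  obtain ⟨hpu, huq⟩ := hu
  have hqp : 0 < q - p := by linarith
  have hD : 0 < (q - u) * (u - p) := mul_pos (by linarith) (by linarith)
  set w := (2 * u - p - q) / (q - p)
  have hw : |w| < 1 := by
    rw [abs_div, abs_of_pos hqp, div_lt_one hqp, abs_lt]
    constructor <;> linarith
  have hsqrt_w : √(1 - w ^ 2) = 2 / (q - p) * √((q - u) * (u - p)) := by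
    have : 1 - w ^ 2 = (2 / (q - p)) ^ 2 * ((q - u) * (u - p)) := by
      simp only [w]; field_simp; ring
    rw [this, sqrt_mul (sq_nonneg _), sqrt_sq (by positivity)]
  have hw' : HasDerivAt (fun u => (2 * u - p - q) / (q - p)) (2 / (q - p)) u := by
    simpa using (((hasDerivAt_id u).const_mul 2).sub_const p |>.sub_const q).div_const (q - p)
  have harcsin := (hasDerivAt_arcsin (by linarith [neg_abs_le w])
    (by linarith [le_abs_self w])).comp u hw'
  have hD' : HasDerivAt (fun u => (q - u) * (u - p)) (-(u - p) + (q - u)) u :=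
    (((hasDerivAt_id' u).const_sub q).mul ((hasDerivAt_id' u).sub_const p)).congr_deriv (by ring)
  refine ((harcsin.const_mul ((p + q) / 2)).sub (hD'.sqrt hD.ne')).congr_deriv ?_
  rw [hsqrt_w]
  have hD_sqrt := sqrt_pos.mpr hD
  field_simp
  ring

theorem hasDerivAt_sqrt_add_sq {c r : ℝ} (h : c + r ^ 2 ≠ 0) :
    HasDerivAt (fun r => √(c + r ^ 2)) (r / √(c + r ^ 2)) r :=
  (((hasDerivAt_pow 2 r).const_add c).sqrt h).congr_deriv (by field_simp; ring)

theorem integral_one_div_sqrt_of_sq_mul_eq {f : ℝ → ℝ} {β s a b : ℝ} (ha : 0 < a) (hab : a < b)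
    (hs : 0 < s) (hf : ∀ r ∈ Ioo a b, r ^ 2 * f r =
      s * ((√(β ^ 2 + b ^ 2) - √(β ^ 2 + r ^ 2)) * (√(β ^ 2 + r ^ 2) - √(β ^ 2 + a ^ 2)))) :
    ∫ r in a..b, 1 / √(f r) = (√(β ^ 2 + a ^ 2) + √(β ^ 2 + b ^ 2)) / 2 * π / √s := by
  set p := √(β ^ 2 + a ^ 2)
  set q := √(β ^ 2 + b ^ 2)
  set F := fun r => isochronePrimitive p q √(β ^ 2 + r ^ 2) / √s
  have hF : ∀ r ∈ Ioo a b, HasDerivAt F (1 / √(f r)) r := by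
    rintro r ⟨har, hrb⟩
    have hr : 0 < r := ha.trans har
    set u := √(β ^ 2 + r ^ 2)
    have hu : u ∈ Ioo p q :=
      ⟨sqrt_lt_sqrt (by positivity) (by gcongr), sqrt_lt_sqrt (by positivity) (by gcongr)⟩
    have hfr : √(f r) = √s * √((q - u) * (u - p)) / r := by
      have : f r = s * ((q - u) * (u - p)) / r ^ 2 := by
        rw [eq_div_iff (by positivity), ← hf r ⟨har, hrb⟩, mul_comm]
      rw [this, sqrt_div' _ (by positivity), sqrt_sq hr.le, sqrt_mul hs.le]
    have hD : 0 < √((q - u) * (u - p)) :=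
      sqrt_pos.mpr (mul_pos (by linarith [hu.2]) (by linarith [hu.1]))
    refine (((hasDerivAt_isochronePrimitive hu).comp r
      (hasDerivAt_sqrt_add_sq (by positivity))).div_const √s).congr_deriv ?_
    have hu_pos : 0 < u := sqrt_pos.mpr (by positivity)
    rw [hfr]
    field_simp
    rfl
  have hF_cont : ContinuousOn F (Icc a b) :=
    ((continuous_isochronePrimitive p q).comp (by fun_prop)).div_const _ |>.continuousOn
  rw [integral_eq_sub_of_hasDerivAt_of_le hab.le hF_cont hF
    (intervalIntegrable_deriv_of_nonneg (by rwa [uIcc_of_le hab.le])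
      (by rwa [min_eq_left hab.le, max_eq_right hab.le]) (fun r _ => by positivity))]
  simp only [F]
  rw [← sub_div, isochronePrimitive_sub (sqrt_lt_sqrt (by positivity) (by gcongr))]

noncomputable def henonPotential (μ β ε lam r : ℝ) : ℝ :=
  ε + lam / (2 * r ^ 2) - μ / (β + √(β ^ 2 + r ^ 2))

theorem sq_mul_sub_henonPotential {μ β ε lam ξ Λ r : ℝ} (hr : r ≠ 0) :
    r ^ 2 * (2 * ξ - 2 * henonPotential μ β ε lam r - Λ ^ 2 / r ^ 2) =
      2 * (ξ - ε) * √(β ^ 2 + r ^ 2) ^ 2 + 2 * μ * √(β ^ 2 + r ^ 2)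
        + (2 * (ε - ξ) * β ^ 2 - 2 * μ * β - lam - Λ ^ 2) := by
  set u := √(β ^ 2 + r ^ 2)
  have hu_sq : u ^ 2 = β ^ 2 + r ^ 2 := sq_sqrt (by positivity)
  have hβu : 0 < β + u := by
    have : |β| < u := by
      rw [← sqrt_sq_eq_abs]
      exact sqrt_lt_sqrt (sq_nonneg β) (lt_add_of_pos_right _ (by positivity))
    linarith [neg_abs_le β]
  have hr_sq : r ^ 2 / (β + u) = u - β := by
    rw [div_eq_iff hβu.ne']
    linear_combination -hu_sq
  unfold henonPotential
  field_simp
  linear_combination (2 * μ) * hr_sq - 2 * (ξ - ε) * hu_sq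

theorem henon_family_period_general (μ β ε lam ξ Λ r_P r_A : ℝ)
    (hξ : ξ < ε)
    (hrP : 0 < r_P) (hr : r_P < r_A)
    (hP : 2 * ξ - 2 * (ε + lam / (2 * r_P ^ 2)
        - μ / (β + Real.sqrt (β ^ 2 + r_P ^ 2))) - Λ ^ 2 / r_P ^ 2 = 0)
    (hA : 2 * ξ - 2 * (ε + lam / (2 * r_A ^ 2)
        - μ / (β + Real.sqrt (β ^ 2 + r_A ^ 2))) - Λ ^ 2 / r_A ^ 2 = 0) :
    (2 * ∫ r in r_P..r_A, 1 / Real.sqrt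
        (2 * ξ - 2 * (ε + lam / (2 * r ^ 2) - μ / (β + Real.sqrt (β ^ 2 + r ^ 2)))
          - Λ ^ 2 / r ^ 2)) ^ 2 =
      Real.pi ^ 2 / 2 * μ ^ 2 / (ε - ξ) ^ 3 := by
  change (2 * ∫ r in r_P..r_A,
    1 / √(2 * ξ - 2 * henonPotential μ β ε lam r - Λ ^ 2 / r ^ 2)) ^ 2 = _
  have hroot : ∀ r, 0 < r → 2 * ξ - 2 * henonPotential μ β ε lam r - Λ ^ 2 / r ^ 2 = 0 →
      2 * (ξ - ε) * √(β ^ 2 + r ^ 2) ^ 2 + 2 * μ * √(β ^ 2 + r ^ 2)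
        + (2 * (ε - ξ) * β ^ 2 - 2 * μ * β - lam - Λ ^ 2) = 0 := fun r hr h => by
    rw [← sq_mul_sub_henonPotential hr.ne', h, mul_zero]
  have hPA : √(β ^ 2 + r_P ^ 2) < √(β ^ 2 + r_A ^ 2) := sqrt_lt_sqrt (by positivity) (by gcongr)
  obtain ⟨hsum, hprod⟩ := vieta_of_roots hPA.ne (hroot r_P hrP hP) (hroot r_A (hrP.trans hr) hA)
  have hεξ : 0 < ε - ξ := sub_pos.mpr hξ
  have hs : 0 < 2 * (ε - ξ) := by positivity
  rw [integral_one_div_sqrt_of_sq_mul_eq (β := β) hrP hr hs fun r hr' =>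
    (sq_mul_sub_henonPotential (hrP.trans hr'.1).ne').trans
      (by linear_combination √(β ^ 2 + r ^ 2) * hsum + hprod)]
  have hsum' : √(β ^ 2 + r_P ^ 2) + √(β ^ 2 + r_A ^ 2) = μ / (ε - ξ) := by
    rw [eq_div_iff hεξ.ne']
    linear_combination -hsum / 2
  rw [hsum']
  field_simp
  rw [sq_sqrt hs.le]
  ring

/-- In a potential of the Hénon family `ψ(r) = ε + λ/(2r²) - μ/(β + √(β² + r²))`,
the radial period of any bound orbit of energy `ξ < ε` satisfies
`T² = (π²/2)·μ²/(ε - ξ)³`; in particular it depends only on `ξ` and not on `Λ`. -/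
theorem henon_family_period (μ β ε lam ξ Λ r_P r_A : ℝ)
    (hμ : 0 < μ) (hβ : 0 ≤ β) (hξ : ξ < ε)
    (hrP : 0 < r_P) (hr : r_P < r_A)
    (hpos : ∀ r ∈ Set.Ioo r_P r_A,
      0 < 2 * ξ - 2 * (ε + lam / (2 * r ^ 2) - μ / (β + Real.sqrt (β ^ 2 + r ^ 2)))
        - Λ ^ 2 / r ^ 2)
    (hP : 2 * ξ - 2 * (ε + lam / (2 * r_P ^ 2)
        - μ / (β + Real.sqrt (β ^ 2 + r_P ^ 2))) - Λ ^ 2 / r_P ^ 2 = 0)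
    (hA : 2 * ξ - 2 * (ε + lam / (2 * r_A ^ 2)
        - μ / (β + Real.sqrt (β ^ 2 + r_A ^ 2))) - Λ ^ 2 / r_A ^ 2 = 0) :
    (2 * ∫ r in r_P..r_A, 1 / Real.sqrt
        (2 * ξ - 2 * (ε + lam / (2 * r ^ 2) - μ / (β + Real.sqrt (β ^ 2 + r ^ 2)))
          - Λ ^ 2 / r ^ 2)) ^ 2 =
      Real.pi ^ 2 / 2 * μ ^ 2 / (ε - ξ) ^ 3 :=
  henon_family_period_general μ β ε lam ξ Λ r_P r_A hξ hrP hr hP hA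
end

section
/- Let μ > 0, β > 0 and λ > 0, set α := λ/(λ + 4μβ) ∈ (0, 1), and define f(Λ) := Λ/√(Λ² + λ) − Λ/√(Λ² + λ + 4μβ) for Λ > 0. Then the derivative f′ vanishes at the point Λ_o > 0 determined by Λ_o² = λ·(α^{1/3} − 1)/(α − α^{1/3}), the value there is f(Λ_o) = Λ_o·(1 − α^{1/3})/√(Λ_o² + λ), and this value satisfies 0 < f(Λ_o) < 1. -/
/-!
Write `t = α^{1/3}`, so that `t³ (λ + 4μβ) = λ`. The defining equation of `Λ_o` simplifies to
`Λ_o² (t² + t) = λ`, and together these give `Λ_o² + λ = t² (Λ_o² + λ + 4μβ)`. Since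
`d/dΛ (Λ/√(Λ² + c)) = c/√(Λ² + c)³`, the two terms of `f′(Λ_o)` are then `λ/(t³ s³)` and
`(λ + 4μβ)/s³` with `s = √(Λ_o² + λ + 4μβ)`, which agree; the same relation between the square
roots gives the closed form of `f(Λ_o)`, and `Λ_o (1 - t) < Λ_o < √(Λ_o² + λ)` bounds it.
-/

open Real

theorem hasDerivAt_div_sqrt_sq_add {c x : ℝ} (h : 0 < x ^ 2 + c) :
    HasDerivAt (fun y => y / √(y ^ 2 + c)) (c / √(x ^ 2 + c) ^ 3) x := by
  have hsqrt : HasDerivAt (fun y => √(y ^ 2 + c)) (2 * x / (2 * √(x ^ 2 + c))) x :=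
    (by simpa using (hasDerivAt_pow 2 x).add_const c : HasDerivAt (fun y => y ^ 2 + c) (2 * x) x)
      |>.sqrt h.ne'
  refine ((hasDerivAt_id' x).div hsqrt (sqrt_ne_zero'.mpr h)).congr_deriv ?_
  field_simp
  linear_combination sq_sqrt h.le

theorem sq_mul_sq_add_self_eq_of_sq_eq_div {a t x : ℝ} (ht0 : 0 < t) (ht1 : t ≠ 1)
    (hx : x ^ 2 = a * (t - 1) / (t ^ 3 - t)) : x ^ 2 * (t ^ 2 + t) = a := by
  have hfactor : t ^ 3 - t = (t - 1) * (t ^ 2 + t) := by ring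
  have ht1' : t - 1 ≠ 0 := sub_ne_zero.mpr ht1
  rw [hx, hfactor]
  field_simp

section CriticalPoint

variable {a b t x : ℝ}

theorem sqrt_sq_add_eq_mul_sqrt_sq_add (ht : 0 < t) (hab : t ^ 3 * b = a)
    (hx : x ^ 2 * (t ^ 2 + t) = a) : √(x ^ 2 + a) = t * √(x ^ 2 + b) := by
  have hsq : x ^ 2 + a = t ^ 2 * (x ^ 2 + b) :=
    mul_left_cancel₀ ht.ne' (by linear_combination (1 - t) * hx - hab)
  rw [hsq, sqrt_mul (sq_nonneg t), sqrt_sq ht.le]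

theorem hasDerivAt_div_sqrt_sub_div_sqrt_zero (ha : 0 < a) (ht : 0 < t) (hab : t ^ 3 * b = a)
    (hx : x ^ 2 * (t ^ 2 + t) = a) :
    HasDerivAt (fun y => y / √(y ^ 2 + a) - y / √(y ^ 2 + b)) 0 x := by
  have hb : 0 < b := pos_of_mul_pos_right (hab ▸ ha) (by positivity)
  have hsa : 0 < x ^ 2 + a := by positivity
  refine ((hasDerivAt_div_sqrt_sq_add hsa).sub
    (hasDerivAt_div_sqrt_sq_add (c := b) (by positivity))).congr_deriv ?_
  rw [sqrt_sq_add_eq_mul_sqrt_sq_add ht hab hx, ← hab]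
  field_simp
  ring

theorem div_sqrt_sub_div_sqrt_eq (ha : 0 < a) (ht : 0 < t) (hab : t ^ 3 * b = a)
    (hx : x ^ 2 * (t ^ 2 + t) = a) :
    x / √(x ^ 2 + a) - x / √(x ^ 2 + b) = x * (1 - t) / √(x ^ 2 + a) := by
  have hsa : √(x ^ 2 + a) ≠ 0 := sqrt_ne_zero'.mpr (by positivity)
  have hsb : √(x ^ 2 + b) = √(x ^ 2 + a) / t := by
    rw [sqrt_sq_add_eq_mul_sqrt_sq_add ht hab hx, mul_div_cancel_left₀ _ ht.ne']
  rw [hsb]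
  field_simp

end CriticalPoint

theorem mul_one_sub_div_sqrt_sq_add_mem_Ioo {a t x : ℝ} (hx : 0 < x) (ha : 0 < a)
    (ht : t ∈ Set.Ioo (0 : ℝ) 1) : x * (1 - t) / √(x ^ 2 + a) ∈ Set.Ioo (0 : ℝ) 1 := by
  obtain ⟨ht0, ht1⟩ := ht
  have hxs : x < √(x ^ 2 + a) := (lt_sqrt hx.le).mpr (by linarith)
  have hs : 0 < √(x ^ 2 + a) := hx.trans hxs
  refine ⟨div_pos (mul_pos hx (by linarith)) hs, (div_lt_one hs).mpr ?_⟩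
  nlinarith

/-- For the Bounded family with `λ > 0`, setting `α := λ/(λ + 4μβ) ∈ (0,1)`, the
derivative of `f(Λ) = Λ/√(Λ² + λ) - Λ/√(Λ² + λ + 4μβ)` vanishes at the point
`Λ_o > 0` determined by `Λ_o² = λ(α^{1/3} - 1)/(α - α^{1/3})`, where
`f(Λ_o) = Λ_o(1 - α^{1/3})/√(Λ_o² + λ)` and `0 < f(Λ_o) < 1`. -/
theorem bounded_apsidal_interior_max (μ β lam : ℝ)
    (hμ : 0 < μ) (hβ : 0 < β) (hlam : 0 < lam) :
    let α : ℝ := lam / (lam + 4 * μ * β)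
    let f : ℝ → ℝ := fun Λ =>
      Λ / Real.sqrt (Λ ^ 2 + lam) - Λ / Real.sqrt (Λ ^ 2 + lam + 4 * μ * β)
    α ∈ Set.Ioo (0 : ℝ) 1 ∧
      ∀ Λo : ℝ, 0 < Λo →
        Λo ^ 2 = lam * (α ^ ((1 : ℝ) / 3) - 1) / (α - α ^ ((1 : ℝ) / 3)) →
        deriv f Λo = 0 ∧
          f Λo = Λo * (1 - α ^ ((1 : ℝ) / 3)) / Real.sqrt (Λo ^ 2 + lam) ∧
          0 < f Λo ∧ f Λo < 1 := by
  intro α f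
  have hb : 0 < lam + 4 * μ * β := by positivity
  have hα : α ∈ Set.Ioo (0 : ℝ) 1 :=
    ⟨by positivity, (div_lt_one hb).mpr (by linarith [mul_pos (mul_pos four_pos hμ) hβ])⟩
  refine ⟨hα, fun Λo hΛo hΛsq => ?_⟩
  set t := α ^ ((1 : ℝ) / 3)
  have ht : t ∈ Set.Ioo (0 : ℝ) 1 :=
    ⟨rpow_pos_of_pos hα.1 _, rpow_lt_one hα.1.le hα.2 (by norm_num)⟩
  have ht3 : t ^ 3 = α := by
    simpa [t, one_div] using rpow_inv_natCast_pow hα.1.le (n := 3) (by norm_num)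
  have hab : t ^ 3 * (lam + 4 * μ * β) = lam := by
    rw [ht3]; exact div_mul_cancel₀ lam hb.ne'
  have hx : Λo ^ 2 * (t ^ 2 + t) = lam :=
    sq_mul_sq_add_self_eq_of_sq_eq_div ht.1 ht.2.ne (ht3 ▸ hΛsq)
  have hf : f = fun y => y / √(y ^ 2 + lam) - y / √(y ^ 2 + (lam + 4 * μ * β)) := by
    simp only [f, add_assoc]
  have hval : f Λo = Λo * (1 - t) / √(Λo ^ 2 + lam) := by
    rw [hf]; exact div_sqrt_sub_div_sqrt_eq hlam ht.1 hab hx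
  rw [hval]
  exact ⟨by rw [hf]; exact (hasDerivAt_div_sqrt_sub_div_sqrt_zero hlam ht.1 hab hx).deriv, rfl,
    mul_one_sub_div_sqrt_sq_add_mem_Ioo hΛo hlam ht⟩
end
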